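/- arXiv:2212.01643 — 5 statements merged into one kernel-verified Lean document; each statement's English description precedes it below -/
import Mathlib

section
/- Let q ∈ [0,1), m ∈ ℤ_{≥0}, and μ, ν ∈ ℝ with ν q^i ≠ 1 for all integers 0 ≤ i ≤ m−1 (so that (ν;q)_m ≠ 0). Then ∑_{j=0}^{m} φ_{q,μ,ν}(j|m) = 1. -/
open scoped BigOperators

noncomputable section

/-- q-Pochhammer symbol `(a;q)_k` for integer `k`, with the convention
`(a;q)_k = 1/((a/q;1/q)_{-k})` for `k ≤ -1`. -/
def qPoch (a q : ℝ) (k : ℤ) : ℝ :=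
  if 0 ≤ k then ∏ i ∈ Finset.range k.toNat, (1 - a * q ^ i)
  else 1 / ∏ i ∈ Finset.range (-k).toNat, (1 - (a / q) * (1 / q) ^ i)

/-- Infinite q-Pochhammer symbol `(a;q)_∞`. -/
def qPochInf (a q : ℝ) : ℝ := ∏' i : ℕ, (1 - a * q ^ i)

/-- q-beta-binomial weight `φ_{q,μ,ν}(j|m)` (equal to `0` for `j > m`). -/
def phiBB (q μ ν : ℝ) (j m : ℕ) : ℝ :=
  if j ≤ m then
    (∏ i ∈ Finset.range j, (μ - ν * q ^ i)) * qPoch μ q ((m : ℤ) - (j : ℤ)) * qPoch q q (m : ℤ)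
      / (qPoch ν q (m : ℤ) * qPoch q q (j : ℤ) * qPoch q q ((m : ℤ) - (j : ℤ)))
  else 0

/-- q-beta-binomial weight `φ_{q,μ,ν}(j|∞)`. -/
def phiBBInf (q μ ν : ℝ) (j : ℕ) : ℝ :=
  (∏ i ∈ Finset.range j, (μ - ν * q ^ i)) * qPochInf μ q
    / (qPoch q q (j : ℤ) * qPochInf ν q)

/-- Regularized terminating basic hypergeometric sum
`{}_{r+1}φ̄_r(q^{-n}; a_1,…,a_r; b_1,…,b_r | q, z)`. -/
def qHypReg (q z : ℝ) (n : ℕ) (a b : List ℝ) : ℝ :=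
  ∑ k ∈ Finset.range (n + 1),
    z ^ k * (qPoch (q ^ (-(n : ℤ))) q (k : ℤ) / qPoch q q (k : ℤ))
      * ((a.map fun x => qPoch x q (k : ℤ)).prod)
      * ((b.map fun x => qPoch (x * q ^ k) q ((n : ℤ) - (k : ℤ))).prod)

/-- Stochastic higher spin six vertex weight `L^{(J)}_{u,s}(i₁,j₁;i₂,j₂)`. -/
def Lw (q u s : ℝ) (J : ℕ) (i1 j1 i2 j2 : ℕ) : ℝ :=
  (if i1 + j1 = i2 + j2 then (1 : ℝ) else 0) *
    ((-1 : ℝ) ^ i1 * q ^ (((i1 : ℤ) * ((i1 : ℤ) + 2 * (j1 : ℤ) - 1)) / 2) * u ^ i1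
      * s ^ ((j1 : ℤ) + (j2 : ℤ) - (i2 : ℤ)) * qPoch (u / s) q ((j2 : ℤ) - (i1 : ℤ)))
    / (qPoch q q (i2 : ℤ) * qPoch (s * u) q ((i2 : ℤ) + (j2 : ℤ))
        * qPoch (q ^ ((J : ℤ) + 1 - (j1 : ℤ))) q ((j1 : ℤ) - (j2 : ℤ)))
    * qHypReg q q i2
        [q ^ (-(i1 : ℤ)), s * u * q ^ J, q * s / u]
        [s ^ 2, q ^ (1 + (j2 : ℤ) - (i1 : ℤ)), q ^ ((J : ℤ) + 1 - (i2 : ℤ) - (j2 : ℤ))]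

/-- Cross vertex weight `R_{z,s₁,s₂}(i₁,i₂;j₁,j₂)`. -/
def Rw (q z s1 s2 : ℝ) (i1 i2 j1 j2 : ℕ) : ℝ :=
  (if j1 + i2 = i1 + j2 then (1 : ℝ) else 0) *
    ((-(s1 * z)) ^ j1 * q ^ (((j1 : ℤ) * ((j1 : ℤ) + 2 * (i2 : ℤ) - 1)) / 2)
      * s2 ^ ((i2 : ℤ) + (j2 : ℤ) - (i1 : ℤ)) * qPoch (z * s1 / s2) q ((j2 : ℤ) - (j1 : ℤ)))
    / (qPoch q q (i1 : ℤ) * qPoch (z * s1 * s2) q ((i1 : ℤ) + (j2 : ℤ))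
        * qPoch (s1 ^ (-2 : ℤ) * q ^ (1 - (i2 : ℤ))) q ((i2 : ℤ) - (j2 : ℤ)))
    * qHypReg q q i1
        [q ^ (-(j1 : ℤ)), z * s2 / s1, q * s2 / (z * s1)]
        [s2 ^ 2, q ^ (1 + (j2 : ℤ) - (j1 : ℤ)), s1 ^ (-2 : ℤ) * q ^ (1 - (i1 : ℤ) - (j2 : ℤ))]

/-- Boundary cross vertex weight `R^{bdry}_{z,s₁,s₂}(j₁,j₂)`. -/
def Rbdry (q z s1 s2 : ℝ) (j1 j2 : ℕ) : ℝ :=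
  ((-1 : ℝ) ^ j1 * q ^ (j1 * (j1 - 1) / 2) * s2 ^ (2 * j2)
      * qPoch (s1 * z / s2) q ((j2 : ℤ) - (j1 : ℤ)))
    / (qPoch q q (j2 : ℤ) * qPoch (s2 ^ 2) q (j1 : ℤ))
    * (qPochInf (s2 ^ 2) q / qPochInf (z * s1 * s2) q)
    * qHypReg q q j1
        [z * s2 / s1, q ^ ((j2 : ℤ) - (j1 : ℤ)) * z * s1 / s2]
        [q ^ ((j2 : ℤ) - (j1 : ℤ) + 1), q ^ (1 - (j1 : ℤ)) * z / (s1 * s2)]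

/-- Auxiliary `q = 0` cross vertex weight `R̂^{(0)}_{z,s₁,s₂}(i₁,i₂;j₁,j₂)`. -/
def Rhat0 (z s1 s2 : ℝ) (i1 i2 j1 j2 : ℕ) : ℝ :=
  (if i1 + j2 = i2 + j1 then (1 : ℝ) else 0) *
    (z ^ j1 * (s1 * s2) ^ (-(j1 : ℤ)) * s2 ^ (2 * j2)) *
    ( ((1 - z * s1 / s2 * (if j1 < j2 then (1 : ℝ) else 0))
        * (1 - s2 ^ 2 * (if 0 < i1 then (1 : ℝ) else 0))
        * (1 - s1 ^ 2 * (if i2 = 0 then (1 : ℝ) else 0) * (if 0 < j1 then (1 : ℝ) else 0)))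
      / (1 - z * s1 * s2 * (if 0 < i1 + j2 then (1 : ℝ) else 0))
      - (if i1 = i2 ∧ 0 < i1 then (1 : ℝ) else 0) * (if 0 < j1 then (1 : ℝ) else 0)
          * ((-s1) * (s2 * z - s1) / (1 - z * s1 * s2)) )

/-- The `q = 0` cross vertex weight `R^{(0)}_{z,s₁,s₂}(i₁,i₂;j₁,j₂)`. -/
def R0 (z s1 s2 : ℝ) (i1 i2 j1 j2 : ℕ) : ℝ :=
  if j1 ≤ j2 then Rhat0 z s1 s2 i1 i2 j1 j2
  else z ^ ((j2 : ℤ) - (i2 : ℤ)) * s2 ^ (i2 + j2) * s1 ^ (-(i1 : ℤ) - (j1 : ℤ))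
        * Rhat0 z s2 s1 j2 j1 i2 i1

/-- Auxiliary `q = 0` boundary cross vertex weight `R̂^{bdry,(0)}_{z,s₁,s₂}(j₁,j₂)`. -/
def RbdryHat0 (z s1 s2 : ℝ) (j1 j2 : ℕ) : ℝ :=
  (z ^ j1 * (s1 * s2) ^ (-(j1 : ℤ)) * s2 ^ (2 * j2) / (1 - z * s1 * s2)) *
    ((1 - z * s1 / s2 * (if j1 < j2 then (1 : ℝ) else 0)) * (1 - s2 ^ 2)
      + (z * s1 * s2 - s1 ^ 2) * (if j1 = j2 ∧ 0 < j1 then (1 : ℝ) else 0))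

/-- The `q = 0` boundary cross vertex weight `R^{bdry,(0)}_{z,s₁,s₂}(j₁,j₂)`. -/
def Rbdry0 (z s1 s2 : ℝ) (j1 j2 : ℕ) : ℝ :=
  if j1 ≤ j2 then RbdryHat0 z s1 s2 j1 j2
  else (s2 ^ (2 * j2) * s1 ^ (-(2 * (j1 : ℤ)))
        / (1 - s1 ^ 2 * (if j2 = 0 then (1 : ℝ) else 0))) * RbdryHat0 z s2 s1 j2 j1

/-- Terminating basic hypergeometric series `{}_4φ_3`. -/
def qHyp4phi3 (q z : ℝ) (n : ℕ) (a1 a2 a3 b1 b2 b3 : ℝ) : ℝ :=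
  ∑ k ∈ Finset.range (n + 1),
    (qPoch (q ^ (-(n : ℤ))) q (k : ℤ) * qPoch a1 q (k : ℤ) * qPoch a2 q (k : ℤ)
        * qPoch a3 q (k : ℤ))
      / (qPoch q q (k : ℤ) * qPoch b1 q (k : ℤ) * qPoch b2 q (k : ℤ) * qPoch b3 q (k : ℤ))
      * z ^ k


/-! With the Gaussian binomial `[m,k]_q`, the weights are
`φ(j|m) = [m, m-j]_q (μ - ν)(μ - νq)⋯(μ - νq^{j-1}) (μ;q)_{m-j} / (ν;q)_m`, so the claim is the
q-Chu–Vandermonde identity `∑_{j+k=m} [m,k]_q ∏_{i<j} (μ - νq^i) (μ;q)_k = (ν;q)_m`, a polynomial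
identity in any commutative ring. It follows by induction on `m` from the q-Pascal rule: after
splitting `[m+1,k]_q`, the terms regroup with the factor `(1 - μq^k) + q^k (μ - νq^j) = 1 - νq^m`
for `j + k = m`. -/

open Finset

section QAnalogues

variable {R : Type*} [CommRing R]

def qPochhammer (a q : R) (n : ℕ) : R := ∏ i ∈ range n, (1 - a * q ^ i)

theorem qPochhammer_succ (a q : R) (n : ℕ) :
    qPochhammer a q (n + 1) = qPochhammer a q n * (1 - a * q ^ n) :=
  prod_range_succ _ _

theorem qPochhammer_ne_zero [IsDomain R] {a q : R} {n : ℕ} (h : ∀ i < n, a * q ^ i ≠ 1) :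
    qPochhammer a q n ≠ 0 :=
  prod_ne_zero_iff.2 fun i hi => sub_ne_zero.2 (h i (mem_range.1 hi)).symm

def gaussBinom (q : R) : ℕ → ℕ → R
  | _, 0 => 1
  | 0, _ + 1 => 0
  | n + 1, k + 1 => gaussBinom q n k + q ^ (k + 1) * gaussBinom q n (k + 1)

@[simp] theorem gaussBinom_zero_right (q : R) (n : ℕ) : gaussBinom q n 0 = 1 := by
  cases n <;> rfl

theorem gaussBinom_succ_succ (q : R) (n k : ℕ) :
    gaussBinom q (n + 1) (k + 1) = gaussBinom q n k + q ^ (k + 1) * gaussBinom q n (k + 1) :=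
  rfl

theorem gaussBinom_eq_zero_of_lt (q : R) : ∀ {n k : ℕ}, n < k → gaussBinom q n k = 0
  | 0, _ + 1, _ => rfl
  | n + 1, k + 1, hk => by
    rw [gaussBinom_succ_succ, gaussBinom_eq_zero_of_lt q (by omega),
      gaussBinom_eq_zero_of_lt q (by omega), mul_zero, add_zero]

theorem gaussBinom_mul_qPochhammer_mul_qPochhammer (q : R) :
    ∀ {n k : ℕ}, k ≤ n →
      gaussBinom q n k * qPochhammer q q k * qPochhammer q q (n - k) = qPochhammer q q n
  | n, 0, _ => by simp [qPochhammer]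
  | n + 1, k + 1, hk => by
    have ih := gaussBinom_mul_qPochhammer_mul_qPochhammer q (Nat.le_of_succ_le_succ hk)
    rcases (Nat.le_of_succ_le_succ hk).lt_or_eq with hlt | rfl
    · have ih' : gaussBinom q n (k + 1) * qPochhammer q q (k + 1)
          * qPochhammer q q (n - (k + 1)) = qPochhammer q q n :=
        gaussBinom_mul_qPochhammer_mul_qPochhammer q hlt
      obtain ⟨r, rfl⟩ := Nat.exists_eq_add_of_lt hlt
      rw [show k + r + 1 - (k + 1) = r by omega, qPochhammer_succ q q k] at ih'
      rw [show k + r + 1 - k = r + 1 by omega, qPochhammer_succ q q r] at ih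
      rw [show k + r + 1 + 1 - (k + 1) = r + 1 by omega, gaussBinom_succ_succ,
        qPochhammer_succ q q (k + r + 1), qPochhammer_succ q q k, qPochhammer_succ q q r]
      linear_combination (1 - q * q ^ k) * ih + q ^ (k + 1) * (1 - q * q ^ r) * ih'
    · rw [gaussBinom_succ_succ, gaussBinom_eq_zero_of_lt q (Nat.lt_succ_self k), Nat.sub_self,
        qPochhammer_succ]
      simp only [Nat.sub_self, qPochhammer, range_zero, prod_empty, mul_one] at ih ⊢
      linear_combination (1 - q * q ^ k) * ih

theorem sum_gaussBinom_mul_prod_sub_mul_qPochhammer (q μ ν : R) (m : ℕ) :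
    ∑ p ∈ antidiagonal m,
        gaussBinom q m p.2 * (∏ i ∈ range p.1, (μ - ν * q ^ i)) * qPochhammer μ q p.2
      = qPochhammer ν q m := by
  induction m with
  | zero => simp [qPochhammer]
  | succ m ih =>
    have shift : ∑ p ∈ antidiagonal (m + 1),
          q ^ p.2 * gaussBinom q m p.2 * (∏ i ∈ range p.1, (μ - ν * q ^ i))
            * qPochhammer μ q p.2
        = ∑ p ∈ antidiagonal m,
          q ^ p.2 * gaussBinom q m p.2 * (∏ i ∈ range (p.1 + 1), (μ - ν * q ^ i))
            * qPochhammer μ q p.2 := by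
      rw [Nat.sum_antidiagonal_succ, gaussBinom_eq_zero_of_lt q (Nat.lt_succ_self m)]
      simp
    calc ∑ p ∈ antidiagonal (m + 1),
          gaussBinom q (m + 1) p.2 * (∏ i ∈ range p.1, (μ - ν * q ^ i)) * qPochhammer μ q p.2
        = ∑ p ∈ antidiagonal m,
            gaussBinom q m p.2 * (∏ i ∈ range p.1, (μ - ν * q ^ i)) * qPochhammer μ q (p.2 + 1)
          + ∑ p ∈ antidiagonal (m + 1), q ^ p.2 * gaussBinom q m p.2
            * (∏ i ∈ range p.1, (μ - ν * q ^ i)) * qPochhammer μ q p.2 := by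
          rw [Nat.sum_antidiagonal_succ', Nat.sum_antidiagonal_succ' (n := m)]
          simp only [gaussBinom_succ_succ, gaussBinom_zero_right, add_mul, sum_add_distrib,
            qPochhammer, range_zero, prod_empty, one_mul, mul_one, pow_zero]
          ring
      _ = ∑ p ∈ antidiagonal m, (1 - ν * q ^ m) *
            (gaussBinom q m p.2 * (∏ i ∈ range p.1, (μ - ν * q ^ i)) * qPochhammer μ q p.2) := by
          rw [shift, ← sum_add_distrib]
          refine sum_congr rfl fun p hp => ?_
          rw [← mem_antidiagonal.1 hp, qPochhammer_succ, prod_range_succ]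
          ring
      _ = qPochhammer ν q (m + 1) := by rw [← mul_sum, ih, qPochhammer_succ]; ring

end QAnalogues

theorem qPoch_natCast (a q : ℝ) (n : ℕ) : qPoch a q n = qPochhammer a q n := by
  simp [qPoch, qPochhammer]

theorem phiBB_eq_gaussBinom_mul_div {q μ ν : ℝ} {j k m : ℕ} (hj : qPochhammer q q j ≠ 0)
    (hk : qPochhammer q q k ≠ 0) (hm : j + k = m) :
    phiBB q μ ν j m
      = gaussBinom q m k * (∏ i ∈ range j, (μ - ν * q ^ i)) * qPochhammer μ q k
        / qPochhammer ν q m := by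
  have hFm := gaussBinom_mul_qPochhammer_mul_qPochhammer q (show k ≤ m by omega)
  rw [show m - k = j by omega] at hFm
  rw [phiBB, if_pos (by omega), show (m : ℤ) - j = k by omega, qPoch_natCast, qPoch_natCast,
    qPoch_natCast, qPoch_natCast, qPoch_natCast, ← hFm]
  field_simp

/-- the q-beta-binomial weights sum to one. -/
theorem phiBB_sum_to_one (q μ ν : ℝ) (hq0 : 0 ≤ q) (hq1 : q < 1) (m : ℕ)
    (hν : ∀ i : ℕ, i < m → ν * q ^ i ≠ 1) :
    ∑ j ∈ Finset.range (m + 1), phiBB q μ ν j m = 1 := by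
  have hqq (n : ℕ) : qPochhammer q q n ≠ 0 := qPochhammer_ne_zero fun i _ => by
    rw [← pow_succ']
    exact (pow_lt_one₀ hq0 hq1 i.succ_ne_zero).ne
  calc ∑ j ∈ Finset.range (m + 1), phiBB q μ ν j m
      = ∑ p ∈ antidiagonal m, phiBB q μ ν p.1 m :=
        (Nat.sum_antidiagonal_eq_sum_range_succ (fun j _ => phiBB q μ ν j m) m).symm
    _ = ∑ p ∈ antidiagonal m,
          gaussBinom q m p.2 * (∏ i ∈ range p.1, (μ - ν * q ^ i)) * qPochhammer μ q p.2
            / qPochhammer ν q m :=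
        sum_congr rfl fun p hp =>
          phiBB_eq_gaussBinom_mul_div (hqq _) (hqq _) (mem_antidiagonal.1 hp)
    _ = 1 := by
      rw [← sum_div, sum_gaussBinom_mul_prod_sub_mul_qPochhammer,
        div_self (qPochhammer_ne_zero hν)]

end
end

section
/- Let q ∈ [0,1) and μ, ν ∈ ℝ with 0 ≤ μ < 1 and ν ≤ μ. Then the series ∑_{j=0}^{∞} φ_{q,μ,ν}(j|∞) converges absolutely and equals 1. -/
open scoped BigOperators

noncomputable section

/-!
Write `φ(j|∞) = (μ;q)_∞ / (ν;q)_∞ · c_j` with `c_j = ∏_{i<j} (μ - ν qⁱ) / (q;q)_j`; the claim is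
then the q-binomial theorem `∑ c_j = (ν;q)_∞ / (μ;q)_∞`. Since `|c_{j+1} / c_j| → μ < 1`, the
series converges absolutely by the ratio test. Its generating function `G(z) = ∑ c_j zʲ` satisfies
`(1 - μz) G(z) = (1 - νz) G(qz)`, so `(μ;q)_n G(1) = (ν;q)_n G(qⁿ)`, and letting `n → ∞`
(with `G(qⁿ) → c_0 = 1` by dominated convergence) gives `(μ;q)_∞ G(1) = (ν;q)_∞`.
The infinite products are positive for `μ, ν < 1`, being exponentials of convergent sums of logarithms.
-/

open Filter Topology Finset

lemma qPoch_natCast_s1 (a q : ℝ) (n : ℕ) : qPoch a q n = ∏ i ∈ range n, (1 - a * q ^ i) := by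
  simp [qPoch]

section qPochInf

variable {q : ℝ}

lemma hasProd_qPochInf (a : ℝ) (hq : |q| < 1) :
    HasProd (fun i => 1 - a * q ^ i) (qPochInf a q) := by
  have h : Multipliable fun i => 1 + -a * q ^ i :=
    Real.multipliable_one_add_of_summable ((summable_geometric_of_abs_lt_one hq).mul_left (-a))
  simpa only [qPochInf, neg_mul, ← sub_eq_add_neg] using h.hasProd

lemma one_sub_mul_pow_pos {a : ℝ} (ha : a < 1) (hq0 : 0 ≤ q) (hq1 : q ≤ 1) (i : ℕ) :
    0 < 1 - a * q ^ i := by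
  have := pow_nonneg hq0 i
  rcases le_or_gt a 0 with h | h
  · nlinarith
  · nlinarith [pow_le_one₀ hq0 hq1 (n := i)]

lemma qPochInf_pos {a : ℝ} (ha : a < 1) (hq0 : 0 ≤ q) (hq1 : q < 1) : 0 < qPochInf a q := by
  have hlog : Summable fun i => Real.log (1 - a * q ^ i) := by
    simpa only [neg_mul, ← sub_eq_add_neg] using
      Real.summable_log_one_add_of_summable ((summable_geometric_of_lt_one hq0 hq1).mul_left (-a))
  rw [qPochInf, ← Real.rexp_tsum_eq_tprod (one_sub_mul_pow_pos ha hq0 hq1.le) hlog]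
  exact Real.exp_pos _

end qPochInf

def qBinomialTerm (q μ ν : ℝ) (j : ℕ) : ℝ :=
  (∏ i ∈ range j, (μ - ν * q ^ i)) / ∏ i ∈ range j, (1 - q * q ^ i)

def qBinomialSeries (q μ ν z : ℝ) : ℝ := ∑' j, qBinomialTerm q μ ν j * z ^ j

section qBinomial

variable {q : ℝ} (μ ν : ℝ)

lemma qBinomialTerm_zero : qBinomialTerm q μ ν 0 = 1 := by
  simp [qBinomialTerm]

lemma qBinomialTerm_succ (j : ℕ) :
    qBinomialTerm q μ ν (j + 1) = qBinomialTerm q μ ν j * ((μ - ν * q ^ j) / (1 - q * q ^ j)) := by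
  simp only [qBinomialTerm, prod_range_succ, mul_div_mul_comm]

lemma qBinomialTerm_succ_mul (hq : |q| < 1) (j : ℕ) :
    qBinomialTerm q μ ν (j + 1) * (1 - q ^ (j + 1)) = qBinomialTerm q μ ν j * (μ - ν * q ^ j) := by
  have hlt : |q * q ^ j| < 1 := by
    rw [abs_mul, abs_pow]
    exact mul_lt_one_of_nonneg_of_lt_one_left (abs_nonneg q) hq (pow_le_one₀ (abs_nonneg q) hq.le)
  have hne : 1 - q * q ^ j ≠ 0 := (sub_pos.2 ((le_abs_self _).trans_lt hlt)).ne'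
  rw [qBinomialTerm_succ, pow_succ', mul_assoc, div_mul_cancel₀ _ hne]

lemma summable_abs_qBinomialTerm (hq : |q| < 1) (hμ : |μ| < 1) :
    Summable fun j => |qBinomialTerm q μ ν j| := by
  have hpow := tendsto_pow_atTop_nhds_zero_of_abs_lt_one hq
  have hnum : Tendsto (fun j => |μ - ν * q ^ j|) atTop (𝓝 |μ - ν * 0|) :=
    (tendsto_const_nhds.sub (hpow.const_mul ν)).abs
  have hden : Tendsto (fun j => |1 - q * q ^ j|) atTop (𝓝 |1 - q * 0|) :=
    (tendsto_const_nhds.sub (hpow.const_mul q)).abs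
  have hratio : Tendsto (fun j => |μ - ν * q ^ j| / |1 - q * q ^ j|) atTop
      (𝓝 (|μ - ν * 0| / |1 - q * 0|)) := hnum.div hden (by simp)
  rw [mul_zero, mul_zero, sub_zero, sub_zero, abs_one, div_one] at hratio
  refine summable_of_ratio_norm_eventually_le (r := (1 + |μ|) / 2) (by linarith) ?_
  filter_upwards [hratio.eventually (ge_mem_nhds (show |μ| < (1 + |μ|) / 2 by linarith))] with j hj
  rw [Real.norm_eq_abs, Real.norm_eq_abs, abs_abs, abs_abs, qBinomialTerm_succ, abs_mul, abs_div,
    mul_comm]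
  exact mul_le_mul_of_nonneg_right hj (abs_nonneg _)

lemma summable_qBinomialTerm_mul_pow (hq : |q| < 1) (hμ : |μ| < 1) {z : ℝ} (hz : |z| ≤ 1) :
    Summable fun j => qBinomialTerm q μ ν j * z ^ j :=
  (summable_abs_qBinomialTerm μ ν hq hμ).of_norm_bounded fun j => by
    rw [norm_mul, norm_pow, Real.norm_eq_abs, Real.norm_eq_abs]
    exact mul_le_of_le_one_right (abs_nonneg _) (pow_le_one₀ (abs_nonneg z) hz)

lemma qBinomialSeries_functional_eq (hq : |q| < 1) (hμ : |μ| < 1) {z : ℝ} (hz : |z| ≤ 1) :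
    (1 - μ * z) * qBinomialSeries q μ ν z = (1 - ν * z) * qBinomialSeries q μ ν (q * z) := by
  set t := qBinomialTerm q μ ν
  have hqz : |q * z| ≤ 1 := by
    rw [abs_mul]; exact mul_le_one₀ hq.le (abs_nonneg z) hz
  have hf : Summable fun j => t j * z ^ j := summable_qBinomialTerm_mul_pow μ ν hq hμ hz
  have hg : Summable fun j => t j * (q * z) ^ j := summable_qBinomialTerm_mul_pow μ ν hq hμ hqz
  have hdiff : qBinomialSeries q μ ν z - qBinomialSeries q μ ν (q * z)
      = z * (μ * qBinomialSeries q μ ν z - ν * qBinomialSeries q μ ν (q * z)) := by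
    calc _ = ∑' j, (t j * z ^ j - t j * (q * z) ^ j) := (hf.tsum_sub hg).symm
      _ = ∑' j, (t (j + 1) * z ^ (j + 1) - t (j + 1) * (q * z) ^ (j + 1)) := by
          rw [(hf.sub hg).tsum_eq_zero_add, pow_zero, pow_zero, sub_self, zero_add]
      _ = ∑' j, z * (μ * (t j * z ^ j) - ν * (t j * (q * z) ^ j)) := tsum_congr fun j => by
          linear_combination z ^ (j + 1) * qBinomialTerm_succ_mul μ ν hq j
      _ = _ := by
          rw [tsum_mul_left, (hf.mul_left μ).tsum_sub (hg.mul_left ν), tsum_mul_left, tsum_mul_left]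
          rfl
  linear_combination hdiff

lemma prod_mul_qBinomialSeries_one (hq : |q| < 1) (hμ : |μ| < 1) (n : ℕ) :
    (∏ i ∈ range n, (1 - μ * q ^ i)) * qBinomialSeries q μ ν 1
      = (∏ i ∈ range n, (1 - ν * q ^ i)) * qBinomialSeries q μ ν (q ^ n) := by
  induction n with
  | zero => simp
  | succ n ih =>
    have h := qBinomialSeries_functional_eq μ ν hq hμ (z := q ^ n)
      (by rw [abs_pow]; exact pow_le_one₀ (abs_nonneg q) hq.le)
    rw [prod_range_succ, prod_range_succ, pow_succ' q n]
    linear_combination (1 - μ * q ^ n) * ih + (∏ i ∈ range n, (1 - ν * q ^ i)) * h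

lemma tendsto_qBinomialSeries_pow (hq : |q| < 1) (hμ : |μ| < 1) :
    Tendsto (fun n => qBinomialSeries q μ ν (q ^ n)) atTop (𝓝 1) := by
  have hlim : ∀ j, Tendsto (fun n => qBinomialTerm q μ ν j * (q ^ n) ^ j) atTop
      (𝓝 (qBinomialTerm q μ ν j * 0 ^ j)) := fun j =>
    ((tendsto_pow_atTop_nhds_zero_of_abs_lt_one hq).pow j).const_mul _
  have hbound : ∀ n j, ‖qBinomialTerm q μ ν j * (q ^ n) ^ j‖ ≤ |qBinomialTerm q μ ν j| := by
    intro n j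
    rw [norm_mul, norm_pow, norm_pow, Real.norm_eq_abs, Real.norm_eq_abs]
    exact mul_le_of_le_one_right (abs_nonneg _)
      (pow_le_one₀ (by positivity) (pow_le_one₀ (abs_nonneg q) hq.le))
  have h := tendsto_tsum_of_dominated_convergence (summable_abs_qBinomialTerm μ ν hq hμ) hlim
    (Eventually.of_forall hbound)
  rwa [tsum_eq_single 0 fun j hj => by simp [hj], pow_zero, mul_one, qBinomialTerm_zero] at h

theorem qPochInf_mul_qBinomialSeries_one (hq : |q| < 1) (hμ : |μ| < 1) :
    qPochInf μ q * qBinomialSeries q μ ν 1 = qPochInf ν q := by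
  have hμlim := (hasProd_qPochInf μ hq).tendsto_prod_nat.mul_const (qBinomialSeries q μ ν 1)
  have hνlim := (hasProd_qPochInf ν hq).tendsto_prod_nat.mul (tendsto_qBinomialSeries_pow μ ν hq hμ)
  rw [mul_one] at hνlim
  exact tendsto_nhds_unique (hμlim.congr (prod_mul_qBinomialSeries_one μ ν hq hμ)) hνlim

end qBinomial

lemma phiBBInf_eq_mul_qBinomialTerm (q μ ν : ℝ) (j : ℕ) :
    phiBBInf q μ ν j = qPochInf μ q / qPochInf ν q * qBinomialTerm q μ ν j := by
  rw [phiBBInf, qPoch_natCast_s1, qBinomialTerm, mul_div_mul_comm, mul_comm]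

/-- the infinite q-beta-binomial weights sum (absolutely) to one. -/
theorem phiBBInf_sum_to_one (q μ ν : ℝ) (hq0 : 0 ≤ q) (hq1 : q < 1)
    (hμ0 : 0 ≤ μ) (hμ1 : μ < 1) (hνμ : ν ≤ μ) :
    Summable (fun j : ℕ => |phiBBInf q μ ν j|) ∧
      ∑' j : ℕ, phiBBInf q μ ν j = 1 := by
  have hq : |q| < 1 := abs_lt.2 ⟨by linarith, hq1⟩
  have hμ : |μ| < 1 := abs_lt.2 ⟨by linarith, hμ1⟩
  have hμpos := qPochInf_pos hμ1 hq0 hq1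
  have hνpos := qPochInf_pos (hνμ.trans_lt hμ1) hq0 hq1
  have hbinom := qPochInf_mul_qBinomialSeries_one μ ν hq hμ
  simp only [qBinomialSeries, one_pow, mul_one] at hbinom
  simp only [phiBBInf_eq_mul_qBinomialTerm]
  constructor
  · simpa only [abs_mul, abs_of_pos (div_pos hμpos hνpos)] using
      (summable_abs_qBinomialTerm μ ν hq hμ).mul_left (qPochInf μ q / qPochInf ν q)
  · rw [tsum_mul_left, div_mul_eq_mul_div, hbinom, div_self hνpos.ne']
end
end

section
/- Let q ∈ [0,1) and μ, ν ∈ ℝ with 0 ≤ μ ≤ 1, ν ≤ μ, and ν < 1. Then φ_{q,μ,ν}(j|m) ≥ 0 for all integers 0 ≤ j ≤ m with m ∈ ℤ_{≥0}, and φ_{q,μ,ν}(j|∞) ≥ 0 for all j ∈ ℤ_{≥0}. -/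
open scoped BigOperators

noncomputable section

lemma factor_nonneg (q x : ℝ) (hq0 : 0 ≤ q) (hq1 : q < 1) (hx : x ≤ 1) (i : ℕ) :
    0 ≤ 1 - x * q ^ i := by
  have h0 : (0:ℝ) ≤ q ^ i := pow_nonneg hq0 i
  have h1 : q ^ i ≤ 1 := pow_le_one₀ hq0 hq1.le
  nlinarith

lemma qPoch_nonneg (a q : ℝ) (hq0 : 0 ≤ q) (hq1 : q < 1) (ha : a ≤ 1) (k : ℤ)
    (hk : 0 ≤ k) : 0 ≤ qPoch a q k := by
  unfold qPoch
  rw [if_pos hk]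
  exact Finset.prod_nonneg fun i _ => factor_nonneg q a hq0 hq1 ha i

lemma qPochInf_nonneg (a q : ℝ) (hq0 : 0 ≤ q) (hq1 : q < 1) (ha : a ≤ 1) :
    0 ≤ qPochInf a q := by
  unfold qPochInf
  by_cases h : Multipliable fun i : ℕ => (1 - a * q ^ i)
  · refine ge_of_tendsto' h.hasProd fun s => ?_
    exact Finset.prod_nonneg fun i _ => factor_nonneg q a hq0 hq1 ha i
  · rw [tprod_eq_one_of_not_multipliable h]; norm_num

lemma numfac_nonneg (q μ ν : ℝ) (hq0 : 0 ≤ q) (hq1 : q < 1)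
    (hμ0 : 0 ≤ μ) (hνμ : ν ≤ μ) (i : ℕ) : 0 ≤ μ - ν * q ^ i := by
  have h0 : (0:ℝ) ≤ q ^ i := pow_nonneg hq0 i
  have h1 : q ^ i ≤ 1 := pow_le_one₀ hq0 hq1.le
  rcases le_or_gt 0 ν with hν | hν
  · nlinarith
  · nlinarith

/-- nonnegativity of the q-beta-binomial weights for
`0 ≤ μ ≤ 1`, `ν ≤ μ`, `ν < 1`. -/
theorem phiBB_nonneg (q μ ν : ℝ) (hq0 : 0 ≤ q) (hq1 : q < 1)
    (hμ0 : 0 ≤ μ) (hμ1 : μ ≤ 1) (hνμ : ν ≤ μ) (hν1 : ν < 1) :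
    (∀ m j : ℕ, j ≤ m → 0 ≤ phiBB q μ ν j m) ∧
      ∀ j : ℕ, 0 ≤ phiBBInf q μ ν j := by
  have hq : q ≤ 1 := hq1.le
  constructor
  · intro m j hjm
    unfold phiBB
    rw [if_pos hjm]
    apply div_nonneg
    · refine mul_nonneg (mul_nonneg ?_ ?_) ?_
      · exact Finset.prod_nonneg fun i _ => numfac_nonneg q μ ν hq0 hq1 hμ0 hνμ i
      · exact qPoch_nonneg μ q hq0 hq1 hμ1 _ (by omega)
      · exact qPoch_nonneg q q hq0 hq1 hq _ (by omega)
    · refine mul_nonneg (mul_nonneg ?_ ?_) ?_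
      · exact qPoch_nonneg ν q hq0 hq1 hν1.le _ (by omega)
      · exact qPoch_nonneg q q hq0 hq1 hq _ (by omega)
      · exact qPoch_nonneg q q hq0 hq1 hq _ (by omega)
  · intro j
    unfold phiBBInf
    apply div_nonneg
    · exact mul_nonneg
        (Finset.prod_nonneg fun i _ => numfac_nonneg q μ ν hq0 hq1 hμ0 hνμ i)
        (qPochInf_nonneg μ q hq0 hq1 hμ1)
    · exact mul_nonneg (qPoch_nonneg q q hq0 hq1 hq _ (by omega))
        (qPochInf_nonneg ν q hq0 hq1 hν1.le)


end
end

section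
/- Let q ∈ [0,1), ν ≤ 0, J ∈ ℤ_{≥0}, and set μ = q^J ν. Then φ_{q,μ,ν}(j|m) ≥ 0 for all integers 0 ≤ j ≤ m with m ∈ ℤ_{≥0}, and φ_{q,μ,ν}(j|∞) ≥ 0 for all j ∈ ℤ_{≥0}. -/
open scoped BigOperators

noncomputable section

lemma tprod_nonneg' {f : ℕ → ℝ} (h : ∀ i, 0 ≤ f i) : 0 ≤ ∏' i, f i := by
  by_cases hf : Multipliable f
  · exact ge_of_tendsto' hf.hasProd fun s => Finset.prod_nonneg fun i _ => h i
  · rw [tprod_eq_one_of_not_multipliable hf]; exact zero_le_one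

lemma qPoch_pos_of_nonpos {a q : ℝ} (hq : 0 ≤ q) (ha : a ≤ 0) {k : ℤ} (hk : 0 ≤ k) :
    0 < qPoch a q k := by
  rw [qPoch, if_pos hk]
  apply Finset.prod_pos
  intro i _
  have : a * q ^ i ≤ 0 := mul_nonpos_of_nonpos_of_nonneg ha (pow_nonneg hq i)
  linarith

lemma qPoch_q_pos {q : ℝ} (hq : 0 ≤ q) (hq1 : q < 1) {k : ℤ} (hk : 0 ≤ k) :
    0 < qPoch q q k := by
  rw [qPoch, if_pos hk]
  apply Finset.prod_pos
  intro i _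
  have : q * q ^ i < 1 := by
    calc q * q ^ i = q ^ (i + 1) := by ring
    _ < 1 := pow_lt_one₀ hq hq1 (Nat.succ_ne_zero i)
  linarith

lemma prod_factor_nonneg {q ν : ℝ} (hq0 : 0 ≤ q) (hq1 : q < 1) (hν : ν ≤ 0) (J j : ℕ) :
    0 ≤ ∏ i ∈ Finset.range j, (q ^ J * ν - ν * q ^ i) := by
  by_cases h : j ≤ J
  · apply Finset.prod_nonneg
    intro i hi
    have hiJ : i ≤ J := le_trans (Nat.le_of_lt_succ (Nat.lt_succ_of_lt (Finset.mem_range.mp hi))) h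
    have : q ^ J ≤ q ^ i := pow_le_pow_of_le_one hq0 hq1.le hiJ
    nlinarith
  · apply le_of_eq
    symm
    apply Finset.prod_eq_zero (Finset.mem_range.mpr (lt_of_not_ge h))
    ring

/-- nonnegativity of the q-beta-binomial weights for
`ν ≤ 0` and `μ = q^J ν` with `J ∈ ℤ_{≥0}`. -/
theorem phiBB_nonneg_spin (q ν : ℝ) (hq0 : 0 ≤ q) (hq1 : q < 1) (hν : ν ≤ 0) (J : ℕ) :
    (∀ m j : ℕ, j ≤ m → 0 ≤ phiBB q (q ^ J * ν) ν j m) ∧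
      ∀ j : ℕ, 0 ≤ phiBBInf q (q ^ J * ν) ν j := by
  have hμ : q ^ J * ν ≤ 0 := mul_nonpos_of_nonneg_of_nonpos (pow_nonneg hq0 J) hν
  constructor
  · intro m j hjm
    rw [phiBB, if_pos hjm]
    apply div_nonneg
    · apply mul_nonneg
      · exact mul_nonneg (prod_factor_nonneg hq0 hq1 hν J j)
          (qPoch_pos_of_nonpos hq0 hμ (by omega : (0:ℤ) ≤ (m:ℤ) - (j:ℤ))).le
      · exact (qPoch_q_pos hq0 hq1 (by positivity : (0:ℤ) ≤ (m:ℤ))).le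
    · apply mul_nonneg
      · exact mul_nonneg (qPoch_pos_of_nonpos hq0 hν (by positivity : (0:ℤ) ≤ (m:ℤ))).le
          (qPoch_q_pos hq0 hq1 (by positivity : (0:ℤ) ≤ (j:ℤ))).le
      · exact (qPoch_q_pos hq0 hq1 (by omega : (0:ℤ) ≤ (m:ℤ) - (j:ℤ))).le
  · intro j
    simp only [phiBBInf, qPochInf]
    apply div_nonneg
    · apply mul_nonneg (prod_factor_nonneg hq0 hq1 hν J j)
      refine tprod_nonneg' fun i => ?_
      have : q ^ J * ν * q ^ i ≤ 0 := mul_nonpos_of_nonpos_of_nonneg hμ (pow_nonneg hq0 i)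
      linarith
    · apply mul_nonneg (qPoch_q_pos hq0 hq1 (by positivity : (0:ℤ) ≤ (j:ℤ))).le
      refine tprod_nonneg' fun i => ?_
      have : ν * q ^ i ≤ 0 := mul_nonpos_of_nonpos_of_nonneg hν (pow_nonneg hq0 i)
      linarith

end
end

section
/- Let s_1,s_2 ∈ (−1,0), 0 ≤ z ≤ min{s_1/s_2, s_2/s_1}, and s_1^2 + s_2^2 ≤ 1 + z s_1 s_2. Then R^{(0)}_{z,s_1,s_2}(i_1,i_2;j_1,j_2) ≥ 0 for all i_1,i_2,j_1,j_2 ∈ ℤ_{≥0}. -/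
open scoped BigOperators

noncomputable section

set_option maxHeartbeats 1000000 in
lemma Rhat0_nonneg (z s1 s2 : ℝ)
    (hs1l : -1 < s1) (hs1r : s1 < 0) (hs2l : -1 < s2) (hs2r : s2 < 0)
    (hz0 : 0 ≤ z) (hz1 : z ≤ s1 / s2) (hz2 : z ≤ s2 / s1)
    (hsum : s1 ^ 2 + s2 ^ 2 ≤ 1 + z * s1 * s2)
    (i1 i2 j1 j2 : ℕ) :
    0 ≤ Rhat0 z s1 s2 i1 i2 j1 j2 := by
  unfold Rhat0
  by_cases hcons : i1 + j2 = i2 + j1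
  swap
  · simp [hcons]
  rw [if_pos hcons, one_mul]
  have h12 : 0 < s1 * s2 := mul_pos_of_neg_of_neg hs1r hs2r
  have hz2' : s2 ≤ z * s1 := (le_div_iff_of_neg hs1r).mp hz2
  have hz1' : s1 ≤ z * s2 := (le_div_iff_of_neg hs2r).mp hz1
  have hB : 0 < 1 - z * s1 * s2 := by
    nlinarith [mul_le_mul_of_nonpos_right hz2' hs2r.le]
  have hA1 : z * s1 / s2 ≤ 1 := by
    rw [div_le_iff_of_neg hs2r]; linarith
  have hA0 : 0 ≤ z * s1 / s2 := by
    rw [div_nonneg_iff]; right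
    constructor
    · nlinarith
    · exact hs2r.le
  have hs1sq : s1 ^ 2 < 1 := by nlinarith
  have hs2sq : s2 ^ 2 < 1 := by nlinarith
  have hP : 0 ≤ z ^ j1 * (s1 * s2) ^ (-(j1 : ℤ)) * s2 ^ (2 * j2) := by
    apply mul_nonneg (mul_nonneg (pow_nonneg hz0 _) (zpow_pos h12 _).le)
    exact Even.pow_nonneg (even_two_mul j2) s2
  apply mul_nonneg hP
  by_cases hC : (i1 = i2 ∧ 0 < i1) ∧ 0 < j1
  · obtain ⟨⟨hi, hipos⟩, hjpos⟩ := hC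
    have e1 : ¬ (j1 < j2) := by omega
    have e2 : ¬ (i2 = 0) := by omega
    have e3 : 0 < i1 + j2 := by omega
    rw [if_neg e1, if_pos hipos, if_neg e2, if_pos e3,
      if_pos (show i1 = i2 ∧ 0 < i1 from ⟨hi, hipos⟩), if_pos hjpos]
    have key : (1 - z * s1 / s2 * 0) * (1 - s2 ^ 2 * 1) * (1 - s1 ^ 2 * 0 * 1)
        / (1 - z * s1 * s2 * 1) - 1 * 1 * (-s1 * (s2 * z - s1) / (1 - z * s1 * s2))
        = (1 + z * s1 * s2 - s1 ^ 2 - s2 ^ 2) / (1 - z * s1 * s2) := by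
      rw [show (1 - z * s1 * s2 * 1) = 1 - z * s1 * s2 from by ring, one_mul, one_mul,
        div_sub_div_same]
      congr 1
      ring
    rw [key]
    apply div_nonneg _ hB.le
    linarith
  · have hz' : (if i1 = i2 ∧ 0 < i1 then (1:ℝ) else 0) * (if 0 < j1 then (1:ℝ) else 0) = 0 := by
      rcases not_and_or.mp hC with h1 | h2
      · simp [h1]
      · simp [h2]
    rw [hz', zero_mul, sub_zero]
    apply div_nonneg
    · refine mul_nonneg (mul_nonneg ?_ ?_) ?_ <;> (split_ifs <;> linarith)
    · split_ifs <;> linarith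

/-- nonnegativity of the `q = 0` cross vertex weights. -/
theorem R0_nonneg (z s1 s2 : ℝ)
    (hs1l : -1 < s1) (hs1r : s1 < 0) (hs2l : -1 < s2) (hs2r : s2 < 0)
    (hz0 : 0 ≤ z) (hz1 : z ≤ s1 / s2) (hz2 : z ≤ s2 / s1)
    (hsum : s1 ^ 2 + s2 ^ 2 ≤ 1 + z * s1 * s2)
    (i1 i2 j1 j2 : ℕ) :
    0 ≤ R0 z s1 s2 i1 i2 j1 j2 := by
  unfold R0
  split_ifs with hj
  · exact Rhat0_nonneg z s1 s2 hs1l hs1r hs2l hs2r hz0 hz1 hz2 hsum i1 i2 j1 j2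
  · by_cases hcons : j2 + i1 = j1 + i2
    swap
    · have h0 : Rhat0 z s2 s1 j2 j1 i2 i1 = 0 := by
        unfold Rhat0
        rw [if_neg hcons, zero_mul, zero_mul]
      rw [h0, mul_zero]
    · have hR : 0 ≤ Rhat0 z s2 s1 j2 j1 i2 i1 :=
        Rhat0_nonneg z s2 s1 hs2l hs2r hs1l hs1r hz0 hz2 hz1 (by nlinarith) j2 j1 i2 i1
      have hexp : (-(i1 : ℤ) - (j1 : ℤ)) = -((i1 + j1 : ℕ) : ℤ) := by push_cast; ring
      have h2 : 0 ≤ s2 ^ (i2 + j2) * s1 ^ (-(i1 : ℤ) - (j1 : ℤ)) := by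
        rw [hexp, zpow_neg, zpow_natCast]
        rcases Nat.even_or_odd (i1 + j1) with he | ho
        · have he2 : Even (i2 + j2) := by
            rcases he with ⟨k, hk⟩
            exact ⟨i1 + j2 - k, by omega⟩
          exact mul_nonneg (he2.pow_nonneg s2) (inv_nonneg.mpr (he.pow_nonneg s1))
        · have ho2 : Odd (i2 + j2) := by
            rcases ho with ⟨k, hk⟩
            exact ⟨i1 + j2 - 1 - k, by omega⟩
          have t1 : s2 ^ (i2 + j2) ≤ 0 := ho2.pow_nonpos hs2r.le
          have t2 : (s1 ^ (i1 + j1))⁻¹ ≤ 0 := inv_nonpos.mpr (ho.pow_nonpos hs1r.le)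
          nlinarith [mul_nonneg (neg_nonneg.mpr t1) (neg_nonneg.mpr t2)]
      have hre : z ^ ((j2 : ℤ) - (i2 : ℤ)) * s2 ^ (i2 + j2) * s1 ^ (-(i1 : ℤ) - (j1 : ℤ))
          * Rhat0 z s2 s1 j2 j1 i2 i1
          = z ^ ((j2 : ℤ) - (i2 : ℤ)) * ((s2 ^ (i2 + j2) * s1 ^ (-(i1 : ℤ) - (j1 : ℤ)))
            * Rhat0 z s2 s1 j2 j1 i2 i1) := by ring
      rw [hre]
      exact mul_nonneg (zpow_nonneg hz0 _) (mul_nonneg h2 hR)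


end
end
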